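/- arXiv:1503.01276 — 2 statements merged into one kernel-verified Lean document; each statement's English description precedes it below -/
import Mathlib

section
/- The integral (4/π)∫₀^∞ k²·(π/(2k))·(1 − tanh(πk)) dk equals 1/12. -/
/-!
The integrand is `2 k (1 - tanh (π k))`, and `1 - tanh x = 2 e^{-2x} / (1 + e^{-2x})` expands as
the geometric series `∑ 2 (-1)ⁿ e^{-2(n+1)x}`. Integrating termwise against `k` (a Mellin transform
at `s = 2`) turns it into `(1 / (2π²)) ∑ (-1)ⁿ / (n+1)²`, and this alternating series is
`ζ(2) / 2 = π² / 12`.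
-/

open MeasureTheory Real

lemma hasSum_one_div_nat_add_one_sq :
    HasSum (fun n : ℕ => 1 / ((n : ℝ) + 1) ^ 2) (π ^ 2 / 6) := by
  simpa using (hasSum_nat_add_iff' 1).mpr hasSum_zeta_two

lemma hasSum_neg_one_pow_div_nat_add_one_sq :
    HasSum (fun n : ℕ => (-1) ^ n / ((n : ℝ) + 1) ^ 2) (π ^ 2 / 12) := by
  let f (n : ℕ) : ℝ := 1 / ((n : ℝ) + 1) ^ 2
  have hodd : HasSum (fun n => if Even n then 0 else f n) (0 + π ^ 2 / 6 / 4) :=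
    HasSum.even_add_odd (by simp) <|
      (hasSum_one_div_nat_add_one_sq.div_const 4).congr_fun fun k => by
        simp only [Nat.not_even_two_mul_add_one, if_false, f]
        field_simp
        push_cast
        ring
  have hsub := hasSum_one_div_nat_add_one_sq.sub (hodd.mul_left 2)
  rw [show π ^ 2 / 6 - 2 * (0 + π ^ 2 / 6 / 4) = π ^ 2 / 12 by ring] at hsub
  refine hsub.congr_fun fun n => ?_
  rcases Nat.even_or_odd n with h | h
  · simp [h.neg_one_pow, h, f]
  · simp [h.neg_one_pow, Nat.not_even_iff_odd.mpr h, f]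
    ring

lemma one_sub_tanh_eq (x : ℝ) : 1 - tanh x = 2 * exp (-(2 * x)) / (1 + exp (-(2 * x))) := by
  have hsq : exp (-(2 * x)) = exp (-x) * exp (-x) := by rw [← exp_add]; ring_nf
  have hinv : exp x * exp (-x) = 1 := by rw [← exp_add]; simp
  have : 0 < exp x := exp_pos x
  rw [tanh_eq, hsq]
  field_simp
  linear_combination (-2 * exp (-x)) * hinv

lemma hasSum_one_sub_tanh {x : ℝ} (hx : 0 < x) :
    HasSum (fun n : ℕ => 2 * (-1) ^ n * exp (-(2 * (n + 1)) * x)) (1 - tanh x) := by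
  set r := exp (-(2 * x))
  have hr : |-r| < 1 := by
    rw [abs_neg, abs_of_pos (exp_pos _)]
    exact exp_lt_one_iff.mpr (by linarith)
  have hgeom := (hasSum_geometric_of_abs_lt_one hr).mul_left (2 * r)
  rw [sub_neg_eq_add, ← div_eq_mul_inv, ← one_sub_tanh_eq] at hgeom
  refine hgeom.congr_fun fun n => ?_
  rw [show -(2 * ((n : ℝ) + 1)) * x = -(2 * x) + n * -(2 * x) by ring, exp_add, exp_nat_mul]
  ring

lemma hasSum_mellin_one_sub_tanh_pi_mul_two :
    HasSum (fun n : ℕ => (((-1) ^ n / (2 * π ^ 2 * ((n : ℝ) + 1) ^ 2) : ℝ) : ℂ))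
      (mellin (fun t => ((1 - tanh (π * t) : ℝ) : ℂ)) 2) := by
  have hq (n : ℕ) : (0 : ℝ) < 2 * (n + 1) := by positivity
  refine (hasSum_mellin_pi_mul (a := fun n : ℕ => 2 * (-1) ^ n) (s := 2)
    (fun n => Or.inr (hq n)) (by norm_num) (fun t ht => ?_) ?_).congr_fun fun n => ?_
  · refine (Complex.hasSum_ofReal.mpr (hasSum_one_sub_tanh (mul_pos pi_pos ht))).congr_fun
      fun n => ?_
    push_cast
    ring_nf
  · refine (hasSum_one_div_nat_add_one_sq.div_const 2).summable.congr fun n => ?_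
    norm_num
    field_simp
  · have : (π : ℂ) ≠ 0 := Complex.ofReal_ne_zero.mpr pi_ne_zero
    norm_num
    rw [Complex.cpow_neg, Complex.cpow_two]
    field_simp

lemma integral_mul_one_sub_tanh_pi_mul :
    ∫ t in Set.Ioi (0 : ℝ), t * (1 - tanh (π * t)) = 1 / 24 := by
  have hmellin : mellin (fun t => ((1 - tanh (π * t) : ℝ) : ℂ)) 2
      = ((∫ t in Set.Ioi (0 : ℝ), t * (1 - tanh (π * t)) : ℝ) : ℂ) := by
    rw [mellin, ← integral_complex_ofReal]
    refine setIntegral_congr_fun measurableSet_Ioi fun t _ => ?_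
    norm_num
  have hsum : HasSum (fun n : ℕ => (-1) ^ n / (2 * π ^ 2 * ((n : ℝ) + 1) ^ 2)) (1 / 24) := by
    have h := hasSum_neg_one_pow_div_nat_add_one_sq.div_const (2 * π ^ 2)
    rw [show π ^ 2 / 12 / (2 * π ^ 2) = 1 / 24 by field_simp; ring] at h
    exact h.congr_fun fun n => by field_simp
  exact_mod_cast hmellin ▸
    hasSum_mellin_one_sub_tanh_pi_mul_two.unique (Complex.hasSum_ofReal.mpr hsum)

theorem stmt0 :
    ∫ k in Set.Ioi (0:ℝ), (4 / π) * (k ^ 2 * (π / (2 * k)) * (1 - Real.tanh (π * k))) = 1 / 12 := by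
  have hintegrand (k : ℝ) : (4 / π) * (k ^ 2 * (π / (2 * k)) * (1 - tanh (π * k)))
      = 2 * (k * (1 - tanh (π * k))) := by
    rcases eq_or_ne k 0 with rfl | hk
    · simp
    · field_simp
      ring
  simp_rw [hintegrand]
  rw [integral_const_mul, integral_mul_one_sub_tanh_pi_mul]
  norm_num
end

section
/- For each ν ∈ ℕ, ν ≥ 1, the function φ_ν(z) = √(sin(πz)/π)·P_{ν−1}(cos(πz)) on (0,1) satisfies −φ_ν''(z) − (π²/(4 sin²(πz)))·φ_ν(z) = π²(ν − 1/2)²·φ_ν(z) for all z ∈ (0,1). -/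
/-!
Write `s = sin πz`, `c = cos πz`, `u = √(s/π)` and `g = Pₙ(c)`, so that `φ = u g`. Then
`u' = (πc / 2s) u`, `u'' = -(π²/4)(1 + 1/s²) u`, `g' = -πs Pₙ'(c)`, and Legendre's equation
`(1 - x²) P'' - 2x P' + n(n+1) P = 0` turns `g'' = π²(s² Pₙ''(c) - c Pₙ'(c))` into
`π²(c Pₙ'(c) - n(n+1) Pₙ(c))`. In `φ'' = u'' g + 2u'g' + u g''` the terms in `Pₙ'` cancel, leaving
`-φ'' = π²(n(n+1) + 1/4 + 1/(4s²)) φ` with `n(n+1) + 1/4 = (n + 1/2)²`.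
Legendre's equation itself comes from differentiating `(x² - 1) D(x² - 1)ⁿ = 2nx (x² - 1)ⁿ`
`n + 1` times.
-/

open Real Polynomial

/-- The n-th Legendre polynomial (Rodrigues' formula). -/
noncomputable def legendreP (n : ℕ) : Polynomial ℝ :=
  Polynomial.C (1 / (2 ^ n * n.factorial : ℝ)) * (Polynomial.derivative^[n] ((X ^ 2 - 1) ^ n))

section Rodrigues

variable {R : Type*} [CommRing R]

theorem sq_sub_one_mul_derivative_sq_sub_one_pow (n : ℕ) :
    (X ^ 2 - 1) * derivative ((X ^ 2 - 1) ^ n : R[X]) = 2 * (n : R[X]) * X * (X ^ 2 - 1) ^ n := by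
  cases n with
  | zero => simp
  | succ n =>
    rw [derivative_pow]
    simp only [derivative_sub, derivative_X_pow, derivative_one, Nat.add_sub_cancel, map_natCast]
    push_cast
    ring

theorem sq_sub_one_mul_iterate_derivative_sq_sub_one_pow (n : ℕ) :
    (X ^ 2 - 1) * derivative^[n + 2] ((X ^ 2 - 1) ^ n : R[X])
        + 2 * X * derivative^[n + 1] ((X ^ 2 - 1) ^ n : R[X])
      = (n : R[X]) * ((n : R[X]) + 1) * derivative^[n] ((X ^ 2 - 1) ^ n : R[X]) := by
  set q : R[X] := (X ^ 2 - 1) ^ n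
  have h : derivative^[n] (derivative ((X ^ 2 - 1) * derivative q))
      = derivative^[n] (derivative (2 * (n : R[X]) * X * q)) := by
    rw [sq_sub_one_mul_derivative_sq_sub_one_pow]
  have hlhs : derivative ((X ^ 2 - 1) * derivative q)
      = derivative^[2] q * X ^ 2 - derivative^[2] q + 2 • (derivative q * X) := by
    simp [derivative_mul]; ring
  have hrhs : derivative (2 * (n : R[X]) * X * q)
      = (2 * n) • q + (2 * n) • (derivative q * X) := by
    simp [derivative_mul]; ring
  have hcast : ((n * (n - 1) : ℕ) : R[X]) = n * (n - 1) := by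
    cases n <;> simp
  rw [hlhs, hrhs, iterate_map_add, iterate_map_sub, iterate_map_add, iterate_map_nsmul,
    iterate_map_nsmul, iterate_map_nsmul, iterate_derivative_derivative_mul_X_sq,
    iterate_derivative_derivative_mul_X, ← Function.iterate_add_apply] at h
  simp only [nsmul_eq_mul, hcast] at h
  push_cast at h
  linear_combination h

end Rodrigues

theorem legendreP_ode (n : ℕ) :
    (1 - X ^ 2) * derivative (derivative (legendreP n)) - 2 * X * derivative (legendreP n)
      + (n : ℝ[X]) * ((n : ℝ[X]) + 1) * legendreP n = 0 := by
  have h := sq_sub_one_mul_iterate_derivative_sq_sub_one_pow (R := ℝ) n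
  rw [Function.iterate_succ_apply', Function.iterate_succ_apply'] at h
  simp only [legendreP, derivative_C_mul]
  linear_combination (-C (1 / (2 ^ n * n.factorial : ℝ))) * h

theorem legendreP_ode_eval_cos (n : ℕ) (x : ℝ) :
    sin x ^ 2 * (derivative (derivative (legendreP n))).eval (cos x)
      = 2 * cos x * (derivative (legendreP n)).eval (cos x)
        - n * (n + 1) * (legendreP n).eval (cos x) := by
  have h := congrArg (eval (cos x)) (legendreP_ode n)
  simp only [eval_add, eval_sub, eval_mul, eval_pow, eval_X, eval_one, eval_natCast, eval_ofNat,
    eval_zero] at h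
  linear_combination h + (derivative (derivative (legendreP n))).eval (cos x) * sin_sq_add_cos_sq x

open Filter Topology

theorem deriv_deriv_mul {𝕜 : Type*} [NontriviallyNormedField 𝕜] {f g f' g' : 𝕜 → 𝕜}
    {f'' g'' x : 𝕜} (hf : ∀ᶠ y in 𝓝 x, HasDerivAt f (f' y) y)
    (hg : ∀ᶠ y in 𝓝 x, HasDerivAt g (g' y) y) (hf' : HasDerivAt f' f'' x)
    (hg' : HasDerivAt g' g'' x) :
    deriv (deriv (f * g)) x = f'' * g x + 2 * (f' x * g' x) + f x * g'' := by
  have h : deriv (f * g) =ᶠ[𝓝 x] f' * g + f * g' := by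
    filter_upwards [hf, hg] with y hfy hgy
    exact (hfy.mul hgy).deriv
  rw [h.deriv_eq, ((hf'.mul hg.self_of_nhds).add (hf.self_of_nhds.mul hg')).deriv]
  ring

theorem hasDerivAt_sin_pi_mul (x : ℝ) :
    HasDerivAt (fun y => sin (π * y)) (π * cos (π * x)) x := by
  simpa [mul_comm] using ((hasDerivAt_id x).const_mul π).sin

theorem hasDerivAt_cos_pi_mul (x : ℝ) :
    HasDerivAt (fun y => cos (π * y)) (-(π * sin (π * x))) x := by
  simpa [mul_comm] using ((hasDerivAt_id x).const_mul π).cos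

theorem hasDerivAt_sqrt_sin_pi_mul_div_pi {x : ℝ} (hx : 0 < sin (π * x)) :
    HasDerivAt (fun y => √(sin (π * y) / π))
      (π * cos (π * x) / (2 * sin (π * x)) * √(sin (π * x) / π)) x := by
  refine (((hasDerivAt_sin_pi_mul x).div_const π).sqrt (by positivity)).congr_deriv ?_
  have hu : √(sin (π * x) / π) ≠ 0 := by positivity
  have hu2 : √(sin (π * x) / π) ^ 2 = sin (π * x) / π := sq_sqrt (by positivity)
  field_simp
  rw [hu2]
  field_simp

theorem hasDerivAt_pi_mul_cos_div_two_sin_mul_sqrt {x : ℝ} (hx : 0 < sin (π * x)) :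
    HasDerivAt (fun y => π * cos (π * y) / (2 * sin (π * y)) * √(sin (π * y) / π))
      (-(π ^ 2 / 4) * (1 + 1 / sin (π * x) ^ 2) * √(sin (π * x) / π)) x := by
  refine ((((hasDerivAt_cos_pi_mul x).const_mul π).div ((hasDerivAt_sin_pi_mul x).const_mul 2)
    (by positivity)).mul (hasDerivAt_sqrt_sin_pi_mul_div_pi hx)).congr_deriv ?_
  simp only [Pi.div_apply]
  field_simp
  linear_combination (-4) * sin_sq_add_cos_sq (π * x)

theorem hasDerivAt_eval_cos_pi_mul (p : ℝ[X]) (x : ℝ) :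
    HasDerivAt (fun y => p.eval (cos (π * y)))
      (-(π * sin (π * x)) * (derivative p).eval (cos (π * x))) x :=
  ((p.hasDerivAt _).comp x (hasDerivAt_cos_pi_mul x)).congr_deriv (mul_comm _ _)

theorem hasDerivAt_neg_pi_mul_sin_mul_eval_cos (p : ℝ[X]) (x : ℝ) :
    HasDerivAt (fun y => -(π * sin (π * y)) * (derivative p).eval (cos (π * y)))
      (π ^ 2 * (sin (π * x) ^ 2 * (derivative (derivative p)).eval (cos (π * x))
        - cos (π * x) * (derivative p).eval (cos (π * x)))) x :=
  (((hasDerivAt_sin_pi_mul x).const_mul π).neg.mul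
    (hasDerivAt_eval_cos_pi_mul (derivative p) x)).congr_deriv (by simp only [Pi.neg_apply]; ring)

noncomputable def sqrtSinLegendre (n : ℕ) (z : ℝ) : ℝ :=
  √(sin (π * z) / π) * (legendreP n).eval (cos (π * z))

theorem neg_deriv_deriv_sqrtSinLegendre (n : ℕ) {z : ℝ} (hz : 0 < sin (π * z)) :
    -deriv (deriv (sqrtSinLegendre n)) z - π ^ 2 / (4 * sin (π * z) ^ 2) * sqrtSinLegendre n z
      = π ^ 2 * (n + 1 / 2) ^ 2 * sqrtSinLegendre n z := by
  have hsin : ∀ᶠ y in 𝓝 z, 0 < sin (π * y) :=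
    continuousAt_const.eventually_lt (by fun_prop : ContinuousAt (fun y => sin (π * y)) z) hz
  have hprod : sqrtSinLegendre n
      = (fun y => √(sin (π * y) / π)) * fun y => (legendreP n).eval (cos (π * y)) := rfl
  rw [hprod, deriv_deriv_mul (hsin.mono fun y => hasDerivAt_sqrt_sin_pi_mul_div_pi)
    (.of_forall (hasDerivAt_eval_cos_pi_mul _)) (hasDerivAt_pi_mul_cos_div_two_sin_mul_sqrt hz)
    (hasDerivAt_neg_pi_mul_sin_mul_eval_cos _ z)]
  simp only [Pi.mul_apply]
  field_simp
  linear_combination (-16 * sin (π * z) ^ 2) * legendreP_ode_eval_cos n (π * z)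

theorem stmt5 (ν : ℕ) (hν : 1 ≤ ν) (φ : ℝ → ℝ)
    (hφ : ∀ x : ℝ, φ x = Real.sqrt (Real.sin (π * x) / π) * (legendreP (ν - 1)).eval (Real.cos (π * x)))
    (z : ℝ) (hz : z ∈ Set.Ioo (0:ℝ) 1) :
    -(deriv (deriv φ) z) - (π ^ 2 / (4 * Real.sin (π * z) ^ 2)) * φ z
      = π ^ 2 * ((ν : ℝ) - 1 / 2) ^ 2 * φ z := by
  obtain ⟨n, rfl⟩ : ∃ n, ν = n + 1 := ⟨ν - 1, by omega⟩
  have hsin : 0 < sin (π * z) :=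
    sin_pos_of_pos_of_lt_pi (by nlinarith [pi_pos, hz.1]) (by nlinarith [pi_pos, hz.2])
  rw [show φ = sqrtSinLegendre n from funext hφ, neg_deriv_deriv_sqrtSinLegendre n hsin]
  push_cast
  ring
end
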